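/- arXiv:1810.11617 — 2 statements merged into one kernel-verified Lean document; each statement's English description precedes it below -/
import Mathlib

section
/- Let X and Y be real Banach spaces, C a nonempty closed subset of X, f : X → ℝ and g : X → Y, and let x₀ ∈ C with g(x₀) = 0 be a local minimizer of f over {x ∈ C : g(x) = 0}. Assume: f is Gâteaux differentiable at x₀ and Lipschitz with constant K_f > 0 near x₀; g is Gâteaux differentiable at x₀ and Lipschitz with constant K_g > 0 near x₀; and the system is calm at x₀ with constant a > 0, i.e. dist(x, g⁻¹(0) ∩ C) ≤ a‖g(x)‖ for all x ∈ B(x₀, s) ∩ C for some s > 0. Then for every h ∈ X: Df(x₀)h + K_f·a·‖Dg(x₀)h‖ + K_f·(1 + K_g·a)·d⁻_C(x₀; h) ≥ 0, where d⁻_C(x₀; h) := liminf_{τ→0⁺} dist(x₀ + τh, C)/τ. -/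
/-!
Clarke's exact penalization, applied twice. If `φ` is `K`-Lipschitz near `x₀` and `x₀` minimizes
`φ` locally on `S ∋ x₀`, then `x₀` minimizes `φ + K · dist(·, S)` locally without constraint:
`φ x₀ ≤ φ z ≤ φ x + K ‖x - z‖` for `z ∈ S` almost nearest to `x`. With `S = g⁻¹(0) ∩ C`, calmness
turns `K_f · dist(·, S)` into `K_f a ‖g‖` on `C`, so `x₀` minimizes `f + K_f a ‖g‖` locally on `C`;
this function is `K_f (1 + K_g a)`-Lipschitz, and penalizing once more with `S = C` makes `x₀` a
free local minimizer of `ψ = f + K_f a ‖g‖ + K_f (1 + K_g a) dist(·, C)`. Dividing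
`ψ (x₀ + τ h) - ψ x₀ ≥ 0` by `τ > 0` and passing to the liminf as `τ → 0⁺` gives the inequality.
-/

open Filter Metric Topology Set

noncomputable section

/-- `g` is Gâteaux differentiable at `x` with (continuous linear) derivative `D`:
for every direction `h`, the difference quotients converge as `τ → 0⁺`. -/
def GateauxAt {X Y : Type*} [NormedAddCommGroup X] [NormedSpace ℝ X]
    [NormedAddCommGroup Y] [NormedSpace ℝ Y] (g : X → Y) (x : X) (D : X →L[ℝ] Y) : Prop :=
  ∀ h : X, Tendsto (fun τ : ℝ => τ⁻¹ • (g (x + τ • h) - g x)) (𝓝[>] (0:ℝ)) (𝓝 (D h))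

/-- Lower Dini directional derivative of the distance function to `A` at `x`
in the direction `h`: `liminf_{τ→0⁺} dist(x + τ h, A)/τ`. -/
def lowerDini {X : Type*} [NormedAddCommGroup X] [NormedSpace ℝ X]
    (A : Set X) (x h : X) : ℝ :=
  liminf (fun τ : ℝ => infDist (x + τ • h) A / τ) (𝓝[>] (0:ℝ))

end

open scoped NNReal

section ExactPenalty

variable {α E : Type*} [PseudoMetricSpace α] [SeminormedAddCommGroup E]
  {φ : α → ℝ} {g : α → E} {S C U : Set α} {x₀ : α} {K : ℝ≥0}

theorem IsLocalMinOn.isLocalMin_add_mul_infDist (hmin : IsLocalMinOn φ S x₀) (hx₀ : x₀ ∈ S)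
    (hU : U ∈ 𝓝 x₀) (hφ : LipschitzOnWith K φ U) :
    IsLocalMin (fun x => φ x + K * infDist x S) x₀ := by
  obtain ⟨V, hV, hVmin⟩ := mem_nhdsWithin_iff_exists_mem_nhds_inter.1 hmin
  obtain ⟨r, hr, hrVU⟩ := Metric.mem_nhds_iff.1 (inter_mem hV hU)
  filter_upwards [ball_mem_nhds x₀ (half_pos hr)] with x (hx : dist x x₀ < r / 2)
  have hd : infDist x S < r / 2 := (infDist_le_dist_of_mem hx₀).trans_lt hx
  simp only [infDist_zero_of_mem hx₀, mul_zero, add_zero]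
  -- `infDist x S` need not be attained: use `z ∈ S` with `dist x z < t` for all `t ↓ infDist x S`
  refine ge_of_tendsto (x := 𝓝[>] (infDist x S)) (tendsto_nhdsWithin_of_tendsto_nhds
    ((continuous_const.add (continuous_const.mul continuous_id)).tendsto (infDist x S))) ?_
  filter_upwards [Ioo_mem_nhdsGT hd] with t ⟨hdt, htr⟩
  obtain ⟨z, hzS, hxz⟩ := (infDist_lt_iff ⟨x₀, hx₀⟩).1 hdt
  have hzx₀ : dist z x₀ < r := by linarith [dist_triangle z x x₀, dist_comm x z]
  have hxU : x ∈ U := (hrVU (mem_ball.2 (by linarith))).2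
  have hzVU : z ∈ V ∩ U := hrVU hzx₀
  calc φ x₀ ≤ φ z := hVmin ⟨hzVU.1, hzS⟩
    _ ≤ φ x + K * dist z x := by
      linarith [le_abs_self (φ z - φ x), Real.dist_eq (φ z) (φ x), hφ.dist_le_mul z hzVU.2 x hxU]
    _ ≤ φ x + K * t := by rw [dist_comm]; gcongr

theorem IsLocalMinOn.isLocalMinOn_add_mul_norm_of_calm {a : ℝ}
    (hmin : IsLocalMinOn φ (g ⁻¹' {0} ∩ C) x₀) (hx₀ : x₀ ∈ C) (hgx₀ : g x₀ = 0)
    (hU : U ∈ 𝓝 x₀) (hφ : LipschitzOnWith K φ U)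
    (hcalm : ∀ᶠ x in 𝓝[C] x₀, infDist x (g ⁻¹' {0} ∩ C) ≤ a * ‖g x‖) :
    IsLocalMinOn (fun x => φ x + K * a * ‖g x‖) C x₀ := by
  have hpen := hmin.isLocalMin_add_mul_infDist ⟨hgx₀, hx₀⟩ hU hφ
  filter_upwards [nhdsWithin_le_nhds hpen, hcalm] with x hx hxcalm
  simp only [hgx₀, norm_zero, mul_zero, add_zero,
    infDist_zero_of_mem (show x₀ ∈ g ⁻¹' {0} ∩ C from ⟨hgx₀, hx₀⟩)] at hx ⊢
  calc φ x₀ ≤ φ x + K * infDist x (g ⁻¹' {0} ∩ C) := hx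
    _ ≤ φ x + K * a * ‖g x‖ := by rw [mul_assoc]; gcongr

theorem LipschitzOnWith.add_mul_norm {Kφ Kg c : ℝ≥0} (hφ : LipschitzOnWith Kφ φ U)
    (hg : LipschitzOnWith Kg g U) :
    LipschitzOnWith (Kφ + c * Kg) (fun x => φ x + c * ‖g x‖) U :=
  hφ.add <| by
    simpa [Function.comp_def] using
      ((lipschitzWith_smul (c : ℝ)).comp lipschitzWith_one_norm).comp_lipschitzOnWith hg

end ExactPenalty

theorem le_add_mul_liminf_of_tendsto {ι : Type*} {F : Filter ι} [F.NeBot] {u v : ι → ℝ} {l B : ℝ}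
    (hu : Tendsto u F (𝓝 l)) (hv : IsBoundedUnder (· ≤ ·) F v) (hB : 0 ≤ B)
    (h : ∀ᶠ i in F, 0 ≤ u i + B * v i) :
    0 ≤ l + B * liminf v F := by
  have key : ∀ ε > 0, 0 ≤ l + B * liminf v F + (1 + B) * ε := by
    intro ε hε
    obtain ⟨i, hvi, hi, hui⟩ := ((frequently_lt_of_liminf_lt hv.isCoboundedUnder_ge
      (lt_add_of_pos_right (liminf v F) hε)).and_eventually
      (h.and (hu.eventually (gt_mem_nhds (lt_add_of_pos_right l hε))))).exists
    nlinarith [mul_le_mul_of_nonneg_left hvi.le hB]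
  refine le_of_forall_pos_le_add fun δ hδ => ?_
  have hB1 : 0 < 1 + B := by linarith
  simpa [mul_div_cancel₀ δ hB1.ne'] using key (δ / (1 + B)) (div_pos hδ hB1)

section Dini

variable {X Y : Type*} [NormedAddCommGroup X] [NormedSpace ℝ X]
  [NormedAddCommGroup Y] [NormedSpace ℝ Y]

theorem isBoundedUnder_le_infDist_add_smul_div {C : Set X} {x₀ : X} (hx₀ : x₀ ∈ C) (h : X) :
    IsBoundedUnder (· ≤ ·) (𝓝[>] 0) (fun τ : ℝ => infDist (x₀ + τ • h) C / τ) := by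
  refine isBoundedUnder_of_eventually_le (a := ‖h‖) ?_
  filter_upwards [self_mem_nhdsWithin] with τ (hτ : 0 < τ)
  rw [div_le_iff₀ hτ]
  calc infDist (x₀ + τ • h) C ≤ dist (x₀ + τ • h) x₀ := infDist_le_dist_of_mem hx₀
    _ = ‖h‖ * τ := by simp [dist_eq_norm, norm_smul, abs_of_pos hτ, mul_comm]

theorem GateauxAt.tendsto_norm_div {g : X → Y} {x₀ : X} {Dg : X →L[ℝ] Y}
    (hDg : GateauxAt g x₀ Dg) (hgx₀ : g x₀ = 0) (h : X) :
    Tendsto (fun τ : ℝ => ‖g (x₀ + τ • h)‖ / τ) (𝓝[>] 0) (𝓝 ‖Dg h‖) :=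
  (hDg h).norm.congr' <| eventually_mem_nhdsWithin.mono fun τ (hτ : 0 < τ) => by
    simp [hgx₀, norm_smul, abs_of_pos hτ, div_eq_inv_mul]

theorem IsLocalMin.gateaux_add_mul_norm_add_mul_lowerDini_nonneg {f : X → ℝ} {g : X → Y}
    {C : Set X} {x₀ : X} {Df : X →L[ℝ] ℝ} {Dg : X →L[ℝ] Y} {A B : ℝ}
    (hmin : IsLocalMin (fun x => f x + A * ‖g x‖ + B * infDist x C) x₀)
    (hx₀ : x₀ ∈ C) (hgx₀ : g x₀ = 0) (hDf : GateauxAt f x₀ Df) (hDg : GateauxAt g x₀ Dg)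
    (hB : 0 ≤ B) (h : X) :
    0 ≤ Df h + A * ‖Dg h‖ + B * lowerDini C x₀ h := by
  have hf : Tendsto (fun τ : ℝ => (f (x₀ + τ • h) - f x₀) / τ) (𝓝[>] 0) (𝓝 (Df h)) :=
    (hDf h).congr fun τ => by rw [smul_eq_mul, inv_mul_eq_div]
  have hline : Tendsto (fun τ : ℝ => x₀ + τ • h) (𝓝[>] 0) (𝓝 x₀) :=
    tendsto_nhdsWithin_of_tendsto_nhds <|
      (by fun_prop : Continuous fun τ : ℝ => x₀ + τ • h).tendsto' 0 x₀ (by simp)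
  refine le_add_mul_liminf_of_tendsto (hf.add ((hDg.tendsto_norm_div hgx₀ h).const_mul A))
    (isBoundedUnder_le_infDist_add_smul_div hx₀ h) hB ?_
  filter_upwards [hline.eventually hmin, self_mem_nhdsWithin] with τ hτmin (hτ : 0 < τ)
  simp only [hgx₀, norm_zero, mul_zero, add_zero, infDist_zero_of_mem hx₀] at hτmin
  have hquot : (f (x₀ + τ • h) - f x₀) / τ + A * (‖g (x₀ + τ • h)‖ / τ)
      + B * (infDist (x₀ + τ • h) C / τ)
      = (f (x₀ + τ • h) + A * ‖g (x₀ + τ • h)‖ + B * infDist (x₀ + τ • h) C - f x₀) / τ := by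
    ring
  rw [hquot]
  exact div_nonneg (by linarith) hτ.le

end Dini

theorem stmt1_general {X Y : Type*} [NormedAddCommGroup X] [NormedSpace ℝ X]
    [NormedAddCommGroup Y] [NormedSpace ℝ Y]
    (C : Set X)
    (f : X → ℝ) (g : X → Y) (x₀ : X) (hx₀C : x₀ ∈ C) (hgx₀ : g x₀ = 0)
    -- x₀ is a local minimizer of f over {x ∈ C : g x = 0}
    (hmin : ∃ ε > 0, ∀ x ∈ C, g x = 0 → ‖x - x₀‖ ≤ ε → f x₀ ≤ f x)
    -- f is Gâteaux differentiable at x₀ and Lipschitz with constant Kf near x₀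
    (Df : X →L[ℝ] ℝ) (hDf : GateauxAt f x₀ Df)
    (Kf : ℝ) (hKf : 0 < Kf)
    (hfLip : ∃ r > 0, ∀ x ∈ closedBall x₀ r, ∀ x' ∈ closedBall x₀ r,
      |f x - f x'| ≤ Kf * ‖x - x'‖)
    -- g is Gâteaux differentiable at x₀ and Lipschitz with constant Kg near x₀
    (Dg : X →L[ℝ] Y) (hDg : GateauxAt g x₀ Dg)
    (Kg : ℝ) (hKg : 0 < Kg)
    (hgLip : ∃ r > 0, ∀ x ∈ closedBall x₀ r, ∀ x' ∈ closedBall x₀ r,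
      ‖g x - g x'‖ ≤ Kg * ‖x - x'‖)
    -- calmness of the system `g x = 0, x ∈ C` at x₀ with constant a
    (a : ℝ) (ha : 0 < a) (s : ℝ) (hs : 0 < s)
    (hcalm : ∀ x ∈ closedBall x₀ s ∩ C, infDist x (g ⁻¹' {0} ∩ C) ≤ a * ‖g x‖) :
    ∀ h : X, 0 ≤ Df h + Kf * a * ‖Dg h‖ + Kf * (1 + Kg * a) * lowerDini C x₀ h := by
  intro h
  lift Kf to ℝ≥0 using hKf.le
  lift Kg to ℝ≥0 using hKg.le
  lift a to ℝ≥0 using ha.le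
  obtain ⟨ε, hε, hεmin⟩ := hmin
  obtain ⟨rf, hrf, hfL⟩ := hfLip
  obtain ⟨rg, hrg, hgL⟩ := hgLip
  set U := closedBall x₀ (min rf rg)
  have hU : U ∈ 𝓝 x₀ := closedBall_mem_nhds x₀ (lt_min hrf hrg)
  have hfU : LipschitzOnWith Kf f U := (LipschitzOnWith.of_dist_le_mul fun x hx y hy => by
    simpa [Real.dist_eq, dist_eq_norm] using hfL x hx y hy).mono
      (closedBall_subset_closedBall (min_le_left rf rg))
  have hgU : LipschitzOnWith Kg g U := (LipschitzOnWith.of_dist_le_mul fun x hx y hy => by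
    simpa [dist_eq_norm] using hgL x hx y hy).mono
      (closedBall_subset_closedBall (min_le_right rf rg))
  have hlocmin : IsLocalMinOn f (g ⁻¹' {0} ∩ C) x₀ :=
    mem_nhdsWithin.2 ⟨ball x₀ ε, isOpen_ball, mem_ball_self hε, fun x ⟨hx, hxg, hxC⟩ =>
      hεmin x hxC hxg (by simpa [dist_eq_norm] using (mem_ball.1 hx).le)⟩
  have hcalm' : ∀ᶠ x in 𝓝[C] x₀, infDist x (g ⁻¹' {0} ∩ C) ≤ a * ‖g x‖ :=
    mem_nhdsWithin.2 ⟨ball x₀ s, isOpen_ball, mem_ball_self hs, fun x ⟨hx, hxC⟩ =>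
      hcalm x ⟨ball_subset_closedBall hx, hxC⟩⟩
  have hpen : IsLocalMin
      (fun x => f x + (Kf * a : ℝ≥0) * ‖g x‖ + (Kf + Kf * a * Kg : ℝ≥0) * infDist x C) x₀ :=
    (hlocmin.isLocalMinOn_add_mul_norm_of_calm hx₀C hgx₀ hU hfU hcalm').isLocalMin_add_mul_infDist
      hx₀C hU (hfU.add_mul_norm hgU)
  convert hpen.gateaux_add_mul_norm_add_mul_lowerDini_nonneg hx₀C hgx₀ hDf hDg (by positivity) h
    using 2 <;> push_cast <;> ring

theorem stmt1 {X Y : Type*} [NormedAddCommGroup X] [NormedSpace ℝ X] [CompleteSpace X]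
    [NormedAddCommGroup Y] [NormedSpace ℝ Y] [CompleteSpace Y]
    (C : Set X) (hCne : C.Nonempty) (hCcl : IsClosed C)
    (f : X → ℝ) (g : X → Y) (x₀ : X) (hx₀C : x₀ ∈ C) (hgx₀ : g x₀ = 0)
    -- x₀ is a local minimizer of f over {x ∈ C : g x = 0}
    (hmin : ∃ ε > 0, ∀ x ∈ C, g x = 0 → ‖x - x₀‖ ≤ ε → f x₀ ≤ f x)
    -- f is Gâteaux differentiable at x₀ and Lipschitz with constant Kf near x₀
    (Df : X →L[ℝ] ℝ) (hDf : GateauxAt f x₀ Df)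
    (Kf : ℝ) (hKf : 0 < Kf)
    (hfLip : ∃ r > 0, ∀ x ∈ closedBall x₀ r, ∀ x' ∈ closedBall x₀ r,
      |f x - f x'| ≤ Kf * ‖x - x'‖)
    -- g is Gâteaux differentiable at x₀ and Lipschitz with constant Kg near x₀
    (Dg : X →L[ℝ] Y) (hDg : GateauxAt g x₀ Dg)
    (Kg : ℝ) (hKg : 0 < Kg)
    (hgLip : ∃ r > 0, ∀ x ∈ closedBall x₀ r, ∀ x' ∈ closedBall x₀ r,
      ‖g x - g x'‖ ≤ Kg * ‖x - x'‖)
    -- calmness of the system `g x = 0, x ∈ C` at x₀ with constant a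
    (a : ℝ) (ha : 0 < a) (s : ℝ) (hs : 0 < s)
    (hcalm : ∀ x ∈ closedBall x₀ s ∩ C, infDist x (g ⁻¹' {0} ∩ C) ≤ a * ‖g x‖) :
    ∀ h : X, 0 ≤ Df h + Kf * a * ‖Dg h‖ + Kf * (1 + Kg * a) * lowerDini C x₀ h :=
  stmt1_general C f g x₀ hx₀C hgx₀ hmin Df hDf Kf hKf hfLip Dg hDg Kg hKg hgLip a ha s hs hcalm
end

section
/- Let X and Y be real Banach spaces, let A ⊆ X and B ⊆ Y be closed sets, let x₀ ∈ A and y₀ ∈ B, and endow X × Y with the product norm ‖(x, y)‖ = ‖x‖_X + ‖y‖_Y. If A is tangentially regular at x₀ or B is tangentially regular at y₀, then for all h ∈ X and k ∈ Y: d⁻_{A×B}((x₀, y₀); (h, k)) ≤ dist(h, K(A, x₀)) + dist(k, K(B, y₀)). -/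
open Filter Metric Topology Set

noncomputable section

/-- The contingent (Bouligand) tangent cone to `A` at `x`. -/
def contingentCone {X : Type*} [NormedAddCommGroup X] [NormedSpace ℝ X]
    (A : Set X) (x : X) : Set X :=
  {h | lowerDini A x h = 0}

/-- The adjacent (Ursescu) tangent cone to `A` at `x`. -/
def adjacentCone {X : Type*} [NormedAddCommGroup X] [NormedSpace ℝ X]
    (A : Set X) (x : X) : Set X :=
  {h | Tendsto (fun τ : ℝ => infDist (x + τ • h) A / τ) (𝓝[>] (0:ℝ)) (𝓝 0)}

/-- `A` is tangentially regular at `x` if the contingent and adjacent cones coincide. -/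
def TangentiallyRegular {X : Type*} [NormedAddCommGroup X] [NormedSpace ℝ X]
    (A : Set X) (x : X) : Prop :=
  contingentCone A x = adjacentCone A x

/-- `X × Y` equipped with the sum norm `‖(x, y)‖ = ‖x‖ + ‖y‖`. -/
abbrev toProd1 {X Y : Type*} : X × Y ≃ WithLp 1 (X × Y) := (WithLp.equiv 1 (X × Y)).symm

/-!
The lower Dini derivative `d⁻_S(z; ·)` at a point `z ∈ S` is 1-Lipschitz in the direction, so
it is bounded by the distance to any nonempty set of directions on which it is `≤ 0`. For the sum
norm, `dist((x, y), A × B) = dist(x, A) + dist(y, B)`; hence the Dini quotient of `A × B` in a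
direction `(u, v)` is the sum of those of `A` and `B`. If `u ∈ K(A, x₀)` and `v ∈ K(B, y₀)` and one
of them lies in the adjacent cone (by regularity), its quotient tends to `0`, so the liminf of the
sum is at most the liminf of the other quotient, which is `0`. Applying the Lipschitz bound to the
set `K(A, x₀) × K(B, y₀)` and splitting its distance once more gives the inequality.
-/

section DiniQuotient

variable {X : Type*} [NormedAddCommGroup X] [NormedSpace ℝ X]

def diniQuotient (A : Set X) (x h : X) (τ : ℝ) : ℝ :=
  infDist (x + τ • h) A / τ

lemma lowerDini_eq_liminf_diniQuotient (A : Set X) (x h : X) :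
    lowerDini A x h = liminf (diniQuotient A x h) (𝓝[>] 0) :=
  rfl

lemma mem_adjacentCone_iff_tendsto {A : Set X} {x h : X} :
    h ∈ adjacentCone A x ↔ Tendsto (diniQuotient A x h) (𝓝[>] 0) (𝓝 0) :=
  Iff.rfl

lemma diniQuotient_nonneg (A : Set X) (x h : X) {τ : ℝ} (hτ : 0 ≤ τ) :
    0 ≤ diniQuotient A x h τ :=
  div_nonneg infDist_nonneg hτ

lemma diniQuotient_le_norm {A : Set X} {x : X} (hx : x ∈ A) (h : X) {τ : ℝ} (hτ : 0 ≤ τ) :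
    diniQuotient A x h τ ≤ ‖h‖ := by
  refine div_le_of_le_mul₀ hτ (norm_nonneg h) ?_
  calc infDist (x + τ • h) A ≤ dist (x + τ • h) x := infDist_le_dist_of_mem hx
    _ = ‖h‖ * τ := by rw [dist_self_add_left, norm_smul, Real.norm_of_nonneg hτ, mul_comm]

lemma diniQuotient_le_add_norm_sub (A : Set X) (x h h' : X) {τ : ℝ} (hτ : 0 < τ) :
    diniQuotient A x h τ ≤ diniQuotient A x h' τ + ‖h - h'‖ := by
  rw [diniQuotient, diniQuotient, div_add' _ _ _ hτ.ne', div_le_div_iff_of_pos_right hτ]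
  calc infDist (x + τ • h) A ≤ infDist (x + τ • h') A + dist (x + τ • h) (x + τ • h') :=
        infDist_le_infDist_add_dist
    _ = infDist (x + τ • h') A + ‖h - h'‖ * τ := by
        rw [dist_add_left, dist_smul₀, Real.norm_of_nonneg hτ.le, dist_eq_norm, mul_comm]

lemma isBoundedUnder_ge_diniQuotient (A : Set X) (x h : X) :
    IsBoundedUnder (· ≥ ·) (𝓝[>] 0) (diniQuotient A x h) :=
  isBoundedUnder_of_eventually_ge <|
    eventually_mem_nhdsWithin.mono fun _ hτ => diniQuotient_nonneg A x h (le_of_lt hτ)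

lemma isBoundedUnder_le_diniQuotient {A : Set X} {x : X} (hx : x ∈ A) (h : X) :
    IsBoundedUnder (· ≤ ·) (𝓝[>] 0) (diniQuotient A x h) :=
  isBoundedUnder_of_eventually_le <|
    eventually_mem_nhdsWithin.mono fun _ hτ => diniQuotient_le_norm hx h (le_of_lt hτ)

lemma lowerDini_le_add_norm_sub {A : Set X} {x : X} (hx : x ∈ A) (h h' : X) :
    lowerDini A x h ≤ lowerDini A x h' + ‖h - h'‖ := by
  calc lowerDini A x h ≤ liminf (fun τ => diniQuotient A x h' τ + ‖h - h'‖) (𝓝[>] 0) :=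
        liminf_le_liminf
          (eventually_mem_nhdsWithin.mono fun _ hτ => diniQuotient_le_add_norm_sub A x h h' hτ)
          (isBoundedUnder_ge_diniQuotient A x h)
          (isBoundedUnder_le_add (isBoundedUnder_le_diniQuotient hx h')
            isBoundedUnder_const).isCoboundedUnder_ge
    _ = lowerDini A x h' + ‖h - h'‖ :=
        liminf_add_const _ _ _ (isBoundedUnder_le_diniQuotient hx h').isCoboundedUnder_ge
          (isBoundedUnder_ge_diniQuotient A x h')

lemma lowerDini_le_infDist {A : Set X} {x : X} (hx : x ∈ A) {C : Set X} (hC : C.Nonempty)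
    (hC_nonpos : ∀ u ∈ C, lowerDini A x u ≤ 0) (h : X) :
    lowerDini A x h ≤ infDist h C :=
  (le_infDist hC).2 fun u hu => by
    linarith [lowerDini_le_add_norm_sub hx h u, hC_nonpos u hu, dist_eq_norm h u]

lemma zero_mem_contingentCone {A : Set X} {x : X} (hx : x ∈ A) : (0 : X) ∈ contingentCone A x := by
  simp [contingentCone, lowerDini, infDist_zero_of_mem hx]

end DiniQuotient

lemma Filter.liminf_add_le_of_left_tendsto_zero {ι : Type*} {l : Filter ι} [l.NeBot]
    {f g : ι → ℝ} (hf : Tendsto f l (𝓝 0)) (hg : IsBoundedUnder (· ≥ ·) l g)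
    (hg' : IsCoboundedUnder (· ≥ ·) l g) :
    liminf (f + g) l ≤ liminf g l := by
  simpa [hf.limsup_eq] using
    liminf_add_le hf.isBoundedUnder_ge hf.isBoundedUnder_le hg hg'

lemma Filter.liminf_add_le_of_right_tendsto_zero {ι : Type*} {l : Filter ι} [l.NeBot]
    {f g : ι → ℝ} (hg : Tendsto g l (𝓝 0)) (hf : IsBoundedUnder (· ≥ ·) l f)
    (hf' : IsCoboundedUnder (· ≥ ·) l f) :
    liminf (f + g) l ≤ liminf f l := by
  rw [add_comm]
  exact liminf_add_le_of_left_tendsto_zero hg hf hf'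

section SumNormProduct

lemma dist_toProd1 {X Y : Type*} [PseudoMetricSpace X] [PseudoMetricSpace Y] (x a : X) (y b : Y) :
    dist (toProd1 (x, y)) (toProd1 (a, b)) = dist x a + dist y b := by
  simp [WithLp.prod_dist_eq_add (p := 1) (by norm_num)]

lemma infDist_toProd1_image_prod {X Y : Type*} [PseudoMetricSpace X] [PseudoMetricSpace Y]
    {A : Set X} {B : Set Y} (hA : A.Nonempty) (hB : B.Nonempty) (x : X) (y : Y) :
    infDist (toProd1 (x, y)) (toProd1 '' A ×ˢ B) = infDist x A + infDist y B := by
  set d := infDist (toProd1 (x, y)) (toProd1 '' A ×ˢ B)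
  have hd : ∀ a ∈ A, ∀ b ∈ B, d ≤ dist x a + dist y b := fun a ha b hb =>
    dist_toProd1 x a y b ▸ infDist_le_dist_of_mem (mem_image_of_mem _ (mk_mem_prod ha hb))
  apply le_antisymm
  · have hdA : ∀ a ∈ A, d - dist x a ≤ infDist y B := fun a ha =>
      (le_infDist hB).2 fun b hb => by linarith [hd a ha b hb]
    have : d - infDist y B ≤ infDist x A :=
      (le_infDist hA).2 fun a ha => by linarith [hdA a ha]
    linarith
  · refine (le_infDist ((hA.prod hB).image _)).2 ?_
    rintro _ ⟨⟨a, b⟩, ⟨ha, hb⟩, rfl⟩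
    rw [dist_toProd1]
    exact add_le_add (infDist_le_dist_of_mem ha) (infDist_le_dist_of_mem hb)

variable {X Y : Type*} [NormedAddCommGroup X] [NormedSpace ℝ X]
  [NormedAddCommGroup Y] [NormedSpace ℝ Y]

lemma lowerDini_toProd1_image_prod {A : Set X} {B : Set Y} {x : X} {y : Y}
    (hx : x ∈ A) (hy : y ∈ B) (u : X) (v : Y) :
    lowerDini (toProd1 '' A ×ˢ B) (toProd1 (x, y)) (toProd1 (u, v))
      = liminf (diniQuotient A x u + diniQuotient B y v) (𝓝[>] 0) := by
  rw [lowerDini_eq_liminf_diniQuotient]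
  congr 1
  funext τ
  change infDist (toProd1 (x + τ • u, y + τ • v)) _ / τ = _
  rw [infDist_toProd1_image_prod ⟨x, hx⟩ ⟨y, hy⟩, add_div]
  rfl

lemma lowerDini_toProd1_image_prod_nonpos {A : Set X} {B : Set Y} {x : X} {y : Y}
    (hx : x ∈ A) (hy : y ∈ B) (hreg : TangentiallyRegular A x ∨ TangentiallyRegular B y)
    {u : X} (hu : u ∈ contingentCone A x) {v : Y} (hv : v ∈ contingentCone B y) :
    lowerDini (toProd1 '' A ×ˢ B) (toProd1 (x, y)) (toProd1 (u, v)) ≤ 0 := by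
  rw [lowerDini_toProd1_image_prod hx hy]
  rcases hreg with hregA | hregB
  · rw [hregA] at hu
    exact (liminf_add_le_of_left_tendsto_zero (mem_adjacentCone_iff_tendsto.1 hu)
      (isBoundedUnder_ge_diniQuotient B y v)
      (isBoundedUnder_le_diniQuotient hy v).isCoboundedUnder_ge).trans_eq hv
  · rw [hregB] at hv
    exact (liminf_add_le_of_right_tendsto_zero (mem_adjacentCone_iff_tendsto.1 hv)
      (isBoundedUnder_ge_diniQuotient A x u)
      (isBoundedUnder_le_diniQuotient hx u).isCoboundedUnder_ge).trans_eq hu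

end SumNormProduct

theorem stmt5_general {X Y : Type*} [NormedAddCommGroup X] [NormedSpace ℝ X]
    [NormedAddCommGroup Y] [NormedSpace ℝ Y]
    (A : Set X) (B : Set Y)
    (x₀ : X) (y₀ : Y) (hx₀ : x₀ ∈ A) (hy₀ : y₀ ∈ B)
    (hreg : TangentiallyRegular A x₀ ∨ TangentiallyRegular B y₀) :
    ∀ (h : X) (k : Y),
      lowerDini (toProd1 '' (A ×ˢ B)) (toProd1 (x₀, y₀)) (toProd1 (h, k))
        ≤ infDist h (contingentCone A x₀) + infDist k (contingentCone B y₀) := by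
  intro h k
  have hKA : (contingentCone A x₀).Nonempty := ⟨0, zero_mem_contingentCone hx₀⟩
  have hKB : (contingentCone B y₀).Nonempty := ⟨0, zero_mem_contingentCone hy₀⟩
  rw [← infDist_toProd1_image_prod hKA hKB]
  refine lowerDini_le_infDist (mem_image_of_mem _ (mk_mem_prod hx₀ hy₀))
    ((hKA.prod hKB).image _) ?_ _
  rintro _ ⟨⟨u, v⟩, ⟨hu, hv⟩, rfl⟩
  exact lowerDini_toProd1_image_prod_nonpos hx₀ hy₀ hreg hu hv

theorem stmt5 {X Y : Type*} [NormedAddCommGroup X] [NormedSpace ℝ X] [CompleteSpace X]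
    [NormedAddCommGroup Y] [NormedSpace ℝ Y] [CompleteSpace Y]
    (A : Set X) (B : Set Y) (hA : IsClosed A) (hB : IsClosed B)
    (x₀ : X) (y₀ : Y) (hx₀ : x₀ ∈ A) (hy₀ : y₀ ∈ B)
    (hreg : TangentiallyRegular A x₀ ∨ TangentiallyRegular B y₀) :
    ∀ (h : X) (k : Y),
      lowerDini (toProd1 '' (A ×ˢ B)) (toProd1 (x₀, y₀)) (toProd1 (h, k))
        ≤ infDist h (contingentCone A x₀) + infDist k (contingentCone B y₀) :=
  stmt5_general A B x₀ y₀ hx₀ hy₀ hreg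
end
end
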